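/- Let ≤ be a Tamarkin configuration on {I_ν} for a 2-disk U, and for each color ν let φ_ν : I′_ν → I_ν be a monotone map of finite ordinals. Then the pulled-back relation ≤′ on ⊔_ν I′_ν is a linear order, it is again a Tamarkin configuration on {I′_ν} (i.e. it satisfies conditions (1)–(3)), and the map ⊔_ν I′_ν → ⊔_ν I_ν induced by the φ_ν is monotone from ≤′ to ≤. -/
import Mathlib


open Classical

namespace Paper

/-- The set of colors (minimal balls) of the 2-disk `(n 0, …, n (k-1))`. -/
abbrev Color (k : ℕ) (n : Fin k → ℕ) : Type := Σ i : Fin k, Fin (n i)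

/-- The column map π. -/
def col {k : ℕ} {n : Fin k → ℕ} (ν : Color k n) : Fin k := ν.1

/-- The lexicographic strict order on colors. -/
def colorLT {k : ℕ} {n : Fin k → ℕ} (μ ν : Color k n) : Prop :=
  μ.1.val < ν.1.val ∨ (μ.1.val = ν.1.val ∧ μ.2.val < ν.2.val)

/-- The disjoint union `⊔_ν I_ν`, where `I_ν = {0 < ⋯ < ℓ ν}`. -/
abbrev Pts (k : ℕ) (n : Fin k → ℕ) (ℓ : Color k n → ℕ) : Type :=
  Σ ν : Color k n, Fin (ℓ ν + 1)

/-- `r` is a Tamarkin configuration on `{I_ν}`: a linear order on `⊔_ν I_ν`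
satisfying conditions (1)–(3). -/
def IsTamarkin {k : ℕ} {n : Fin k → ℕ} (ℓ : Color k n → ℕ)
    (r : Pts k n ℓ → Pts k n ℓ → Prop) : Prop :=
  IsLinearOrder (Pts k n ℓ) r ∧
  -- (1) r restricts to the given order on each I_ν
  (∀ (ν : Color k n) (a b : Fin (ℓ ν + 1)), r ⟨ν, a⟩ ⟨ν, b⟩ ↔ a ≤ b) ∧
  -- (2) same column: smaller color entirely precedes larger color
  (∀ ν₁ ν₂ : Color k n, col ν₁ = col ν₂ → colorLT ν₁ ν₂ →
    ∀ (a : Fin (ℓ ν₁ + 1)) (b : Fin (ℓ ν₂ + 1)), r ⟨ν₁, a⟩ ⟨ν₂, b⟩) ∧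
  -- (3) smaller column against larger column: (3a), (3b) or the brace (3c)
  (∀ ν₁ ν₂ : Color k n, (col ν₁).val < (col ν₂).val →
    (∀ (a : Fin (ℓ ν₁ + 1)) (b : Fin (ℓ ν₂ + 1)), r ⟨ν₁, a⟩ ⟨ν₂, b⟩) ∨
    (∀ (a : Fin (ℓ ν₁ + 1)) (b : Fin (ℓ ν₂ + 1)), r ⟨ν₂, b⟩ ⟨ν₁, a⟩) ∨
    (∃ a : ℕ, a < ℓ ν₂ ∧
      (∀ b : Fin (ℓ ν₂ + 1), (b : ℕ) ≤ a →
        ∀ x : Fin (ℓ ν₁ + 1), r ⟨ν₂, b⟩ ⟨ν₁, x⟩) ∧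
      (∀ b : Fin (ℓ ν₂ + 1), a < (b : ℕ) →
        ∀ x : Fin (ℓ ν₁ + 1), r ⟨ν₁, x⟩ ⟨ν₂, b⟩)))

/-- The pull-back (as a reflexive relation) of a configuration `r` along a family of
maps `φ_ν : I′_ν → I_ν`: `x ≤′ y` iff `x = y`, or `φ x <_r φ y`, or `x, y` have the
same color, the same `φ`-image, and `x` comes before `y` inside `I′_ν`. -/
def pullLE {k : ℕ} {n : Fin k → ℕ} {ℓ ℓ' : Color k n → ℕ}
    (r : Pts k n ℓ → Pts k n ℓ → Prop)
    (φ : ∀ ν : Color k n, Fin (ℓ' ν + 1) → Fin (ℓ ν + 1)) (x y : Pts k n ℓ') : Prop :=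
  x = y ∨
    (r ⟨x.1, φ x.1 x.2⟩ ⟨y.1, φ y.1 y.2⟩ ∧ ¬ r ⟨y.1, φ y.1 y.2⟩ ⟨x.1, φ x.1 x.2⟩) ∨
    (x.1 = y.1 ∧ (φ x.1 x.2).val = (φ y.1 y.2).val ∧ x.2.val < y.2.val)

/-- The strict version of the pulled-back order. -/
def pullLT {k : ℕ} {n : Fin k → ℕ} {ℓ ℓ' : Color k n → ℕ}
    (r : Pts k n ℓ → Pts k n ℓ → Prop)
    (φ : ∀ ν : Color k n, Fin (ℓ' ν + 1) → Fin (ℓ ν + 1)) (x y : Pts k n ℓ') : Prop :=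
  pullLE r φ x y ∧ x ≠ y

/-- **Theorem.** The pull-back of a Tamarkin configuration along a family of monotone
maps of finite ordinals `φ_ν : I′_ν → I_ν` is a linear order, is again a Tamarkin
configuration (conditions (1)–(3) hold), and the induced map `⊔_ν I′_ν → ⊔_ν I_ν`
is monotone from `≤′` to `≤`. -/
theorem pullback_of_config_is_config
    (k : ℕ) (n : Fin k → ℕ) (ℓ ℓ' : Color k n → ℕ)
    (r : Pts k n ℓ → Pts k n ℓ → Prop) (hr : IsTamarkin ℓ r)
    (φ : ∀ ν : Color k n, Fin (ℓ' ν + 1) → Fin (ℓ ν + 1))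
    (hφ : ∀ ν, Monotone (φ ν)) :
    IsLinearOrder (Pts k n ℓ') (pullLE r φ) ∧
    IsTamarkin ℓ' (pullLE r φ) ∧
    (∀ x y : Pts k n ℓ', pullLE r φ x y → r ⟨x.1, φ x.1 x.2⟩ ⟨y.1, φ y.1 y.2⟩) := by

  obtain ⟨hlin, h1, h2, h3⟩ := hr
  letI := hlin
  -- basic helpers
  have hPtsEq : ∀ x y : Pts k n ℓ', x.1 = y.1 → x.2.val = y.2.val → x = y := by
    rintro ⟨ν, a⟩ ⟨ν', b⟩ h h'
    cases h
    exact congrArg (Sigma.mk ν) (Fin.ext h')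
  have hFeq : ∀ x y : Pts k n ℓ', x.1 = y.1 → (φ x.1 x.2).val = (φ y.1 y.2).val →
      (⟨x.1, φ x.1 x.2⟩ : Pts k n ℓ) = ⟨y.1, φ y.1 y.2⟩ := by
    rintro ⟨ν, a⟩ ⟨ν', b⟩ h h'
    cases h
    exact congrArg (Sigma.mk ν) (Fin.ext h')
  have hFinj : ∀ x y : Pts k n ℓ', (⟨x.1, φ x.1 x.2⟩ : Pts k n ℓ) = ⟨y.1, φ y.1 y.2⟩ →
      x.1 = y.1 ∧ (φ x.1 x.2).val = (φ y.1 y.2).val := by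
    rintro ⟨ν, a⟩ ⟨ν', b⟩ h
    obtain ⟨h1', h2'⟩ := Sigma.mk.inj_iff.mp h
    subst h1'
    exact ⟨rfl, congrArg Fin.val (eq_of_heq h2')⟩
  have hstrict : ∀ x y : Pts k n ℓ', x.1 ≠ y.1 →
      r ⟨x.1, φ x.1 x.2⟩ ⟨y.1, φ y.1 y.2⟩ → pullLE r φ x y := by
    intro x y hne h
    exact Or.inr (Or.inl ⟨h, fun h' => hne (hFinj x y (antisymm_of r h h')).1⟩)
  -- monotonicity of the induced map
  have hmono : ∀ x y : Pts k n ℓ', pullLE r φ x y →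
      r ⟨x.1, φ x.1 x.2⟩ ⟨y.1, φ y.1 y.2⟩ := by
    intro x y hxy
    rcases hxy with rfl | ⟨h, -⟩ | ⟨e1, e2, -⟩
    · exact refl_of r _
    · exact h
    · rw [hFeq x y e1 e2]; exact refl_of r _
  -- reflexivity
  have hrefl' : ∀ x, pullLE r φ x x := fun x => Or.inl rfl
  -- transitivity
  have htrans' : ∀ x y z : Pts k n ℓ', pullLE r φ x y → pullLE r φ y z →
      pullLE r φ x z := by
    intro x y z hxy hyz
    rcases hxy with rfl | ⟨h₁, h₁'⟩ | ⟨e1, e2, l1⟩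
    · exact hyz
    · rcases hyz with rfl | ⟨h₂, h₂'⟩ | ⟨f1, f2, l2⟩
      · exact Or.inr (Or.inl ⟨h₁, h₁'⟩)
      · exact Or.inr (Or.inl ⟨trans_of r h₁ h₂, fun h => h₂' (trans_of r h h₁)⟩)
      · have e : (⟨y.1, φ y.1 y.2⟩ : Pts k n ℓ) = ⟨z.1, φ z.1 z.2⟩ := hFeq y z f1 f2
        refine Or.inr (Or.inl ⟨e ▸ h₁, fun h => h₁' ?_⟩)
        rwa [← e] at h
    · rcases hyz with rfl | ⟨h₂, h₂'⟩ | ⟨f1, f2, l2⟩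
      · exact Or.inr (Or.inr ⟨e1, e2, l1⟩)
      · have e : (⟨x.1, φ x.1 x.2⟩ : Pts k n ℓ) = ⟨y.1, φ y.1 y.2⟩ := hFeq x y e1 e2
        refine Or.inr (Or.inl ⟨e.symm ▸ h₂, fun h => h₂' ?_⟩)
        rwa [e] at h
      · exact Or.inr (Or.inr ⟨e1.trans f1, e2.trans f2, l1.trans l2⟩)
  -- antisymmetry
  have hanti' : ∀ x y : Pts k n ℓ', pullLE r φ x y → pullLE r φ y x → x = y := by
    intro x y hxy hyx
    rcases hxy with rfl | ⟨h₁, h₁'⟩ | ⟨e1, e2, l1⟩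
    · rfl
    · rcases hyx with rfl | ⟨h₂, h₂'⟩ | ⟨f1, f2, l2⟩
      · rfl
      · exact absurd h₂ h₁'
      · exact absurd (by rw [hFeq y x f1 f2]; exact refl_of r _) h₁'
    · rcases hyx with rfl | ⟨h₂, h₂'⟩ | ⟨f1, f2, l2⟩
      · rfl
      · exact absurd (by rw [hFeq x y e1 e2]; exact refl_of r _) h₂'
      · omega
  -- totality
  have htotal' : ∀ x y : Pts k n ℓ', pullLE r φ x y ∨ pullLE r φ y x := by
    intro x y
    rcases total_of r ⟨x.1, φ x.1 x.2⟩ ⟨y.1, φ y.1 y.2⟩ with h | h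
    · by_cases h' : r ⟨y.1, φ y.1 y.2⟩ ⟨x.1, φ x.1 x.2⟩
      · obtain ⟨e1, e2⟩ := hFinj x y (antisymm_of r h h')
        rcases lt_trichotomy x.2.val y.2.val with hl | hl | hl
        · exact Or.inl (Or.inr (Or.inr ⟨e1, e2, hl⟩))
        · exact Or.inl (Or.inl (hPtsEq x y e1 hl))
        · exact Or.inr (Or.inr (Or.inr ⟨e1.symm, e2.symm, hl⟩))
      · exact Or.inl (Or.inr (Or.inl ⟨h, h'⟩))
    · by_cases h' : r ⟨x.1, φ x.1 x.2⟩ ⟨y.1, φ y.1 y.2⟩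
      · obtain ⟨e1, e2⟩ := hFinj x y (antisymm_of r h' h)
        rcases lt_trichotomy x.2.val y.2.val with hl | hl | hl
        · exact Or.inl (Or.inr (Or.inr ⟨e1, e2, hl⟩))
        · exact Or.inl (Or.inl (hPtsEq x y e1 hl))
        · exact Or.inr (Or.inr (Or.inr ⟨e1.symm, e2.symm, hl⟩))
      · exact Or.inr (Or.inr (Or.inl ⟨h, h'⟩))
  have hlin' : IsLinearOrder (Pts k n ℓ') (pullLE r φ) :=
    { refl := hrefl'
      trans := htrans'
      antisymm := hanti'
      total := htotal' }
  refine ⟨hlin', ⟨hlin', ?_, ?_, ?_⟩, hmono⟩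
  · -- condition (1)
    intro ν a b
    constructor
    · rintro (h | ⟨h, h'⟩ | ⟨-, -, h⟩)
      · simp only [Sigma.mk.inj_iff, heq_eq_eq, true_and] at h
        exact le_of_eq h
      · have hab : φ ν a ≤ φ ν b := (h1 ν _ _).mp h
        by_contra hba
        exact h' ((h1 ν _ _).mpr (hφ ν (le_of_not_ge hba)))
      · exact le_of_lt h
    · intro hab
      rcases eq_or_lt_of_le hab with rfl | hab
      · exact Or.inl rfl
      · have hle : φ ν a ≤ φ ν b := hφ ν (le_of_lt hab)
        rcases eq_or_lt_of_le hle with he | hlt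
        · exact Or.inr (Or.inr ⟨rfl, congrArg Fin.val he, hab⟩)
        · refine Or.inr (Or.inl ⟨(h1 ν _ _).mpr hle, fun h => ?_⟩)
          exact absurd ((h1 ν _ _).mp h) (not_le_of_gt hlt)
  · -- condition (2)
    intro ν₁ ν₂ hc hlt a b
    have hne : ν₁ ≠ ν₂ := by
      rintro rfl
      rcases hlt with h | ⟨-, h⟩ <;> omega
    exact hstrict ⟨ν₁, a⟩ ⟨ν₂, b⟩ hne (h2 ν₁ ν₂ hc hlt (φ ν₁ a) (φ ν₂ b))
  · -- condition (3)
    intro ν₁ ν₂ hcol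
    have hne : ν₁ ≠ ν₂ := by rintro rfl; omega
    rcases h3 ν₁ ν₂ hcol with hA | hB | ⟨a, ha, hpre, hpost⟩
    · exact Or.inl fun a b => hstrict ⟨ν₁, a⟩ ⟨ν₂, b⟩ hne (hA (φ ν₁ a) (φ ν₂ b))
    · exact Or.inr (Or.inl fun a b =>
        hstrict ⟨ν₂, b⟩ ⟨ν₁, a⟩ hne.symm (hB (φ ν₁ a) (φ ν₂ b)))
    · set L := ℓ' ν₂ with hL
      by_cases hall : (φ ν₂ ⟨L, Nat.lt_succ_self L⟩).val ≤ a
      · -- all images ≤ a : everything in I'_{ν₂} precedes I'_{ν₁}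
        refine Or.inr (Or.inl fun x b => ?_)
        have hb : (φ ν₂ b).val ≤ a := by
          have : φ ν₂ b ≤ φ ν₂ ⟨L, Nat.lt_succ_self L⟩ :=
            hφ ν₂ (Fin.le_def.mpr (Nat.lt_succ_iff.mp b.isLt))
          omega
        exact hstrict ⟨ν₂, b⟩ ⟨ν₁, x⟩ hne.symm (hpre (φ ν₂ b) hb (φ ν₁ x))
      · by_cases h0 : a < (φ ν₂ (0 : Fin (L + 1))).val
        · -- all images > a : everything in I'_{ν₁} precedes I'_{ν₂}
          refine Or.inl fun x b => ?_
          have hb : a < (φ ν₂ b).val := by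
            have : φ ν₂ (0 : Fin (L + 1)) ≤ φ ν₂ b := hφ ν₂ (Fin.zero_le b)
            omega
          exact hstrict ⟨ν₁, x⟩ ⟨ν₂, b⟩ hne (hpost (φ ν₂ b) hb (φ ν₁ x))
        · -- genuine brace
          push_neg at h0
          set S : Finset (Fin (L + 1)) :=
            Finset.univ.filter (fun b => (φ ν₂ b).val ≤ a) with hS
          have hS0 : (0 : Fin (L + 1)) ∈ S := by
            simp [hS, h0]
          have hSne : S.Nonempty := ⟨0, hS0⟩
          set a' : Fin (L + 1) := S.max' hSne with ha'
          have ha'mem : a' ∈ S := S.max'_mem hSne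
          have ha'le : (φ ν₂ a').val ≤ a := by
            simpa [hS] using ha'mem
          refine Or.inr (Or.inr ⟨a'.val, ?_, ?_, ?_⟩)
          · -- a'.val < ℓ' ν₂
            rcases Nat.lt_succ_iff_lt_or_eq.mp a'.isLt with h | h
            · exact h
            · exfalso
              have : a' = ⟨L, Nat.lt_succ_self L⟩ := Fin.ext h
              rw [this] at ha'le
              exact hall ha'le
          · intro b hb x
            have : φ ν₂ b ≤ φ ν₂ a' := hφ ν₂ (Fin.le_def.mpr hb)
            have hb' : (φ ν₂ b).val ≤ a := le_trans this ha'le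
            exact hstrict ⟨ν₂, b⟩ ⟨ν₁, x⟩ hne.symm (hpre (φ ν₂ b) hb' (φ ν₁ x))
          · intro b hb x
            have hbS : b ∉ S := by
              intro hmem
              exact absurd (S.le_max' b hmem) (by exact fun h => absurd hb (by omega))
            have hb' : a < (φ ν₂ b).val := by
              by_contra hc'
              exact hbS (by simp [hS]; omega)
            exact hstrict ⟨ν₁, x⟩ ⟨ν₂, b⟩ hne (hpost (φ ν₂ b) hb' (φ ν₁ x))


end Paper
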